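/- arXiv:1807.03929 — 3 statements merged into one kernel-verified Lean document; each statement's English description precedes it below -/
import Mathlib

section
/- Let (X, Y, S) be a random vector on a probability space with X ∈ ℝ^d, Y ∈ {0,1}, S ∈ {0,1}, and let g : ℝ^d → ℝ be measurable with g(X) integrable. Assume the weak prior shift condition: g(X) is conditionally independent of S given Y. Assume P(S = 0) > 0, P(Y = 0, S = 1) > 0, P(Y = 1, S = 1) > 0, and E[g(X) | Y = 1, S = 1] ≠ E[g(X) | Y = 0, S = 1]. Then P(Y = 1 | S = 0) = (E[g(X) | S = 0] − E[g(X) | Y = 0, S = 1]) / (E[g(X) | Y = 1, S = 1] − E[g(X) | Y = 0, S = 1]); in particular this ratio lies in [0,1], so it is unchanged by the trimming map t ↦ max(0, min(1, t)), i.e. both the untrimmed and the trimmed ratio estimator are Fisher consistent for θ = P(Y = 1 | S = 0). -/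
/-!
Conditionally on `Y = j`, `g(X)` is independent of `S`, so its mean over `{Y = j, S = s}` is
`m_j = E[g(X) | Y = j]` whatever `s` is. Hence `a_j = m_j`, and splitting `{S = 0}` along `Y`
exhibits `e₀` as the mixture `θ m₁ + (1 - θ) m₀` with weight `θ = P(Y = 1 | S = 0)`. Solving for
`θ` gives the ratio, which is a conditional probability and therefore lies in `[0, 1]`.
-/

open MeasureTheory ProbabilityTheory

/-- Conditional expectation of `f` given the event `A`: `(∫_A f dμ) / μ(A)`. -/
noncomputable def condMean {Ω : Type*} [MeasurableSpace Ω] (μ : Measure Ω)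
    (f : Ω → ℝ) (A : Set Ω) : ℝ :=
  (∫ ω in A, f ω ∂μ) / (μ A).toReal

theorem Bool.set_eq_empty_or_singleton_or_univ (t : Set Bool) :
    t = ∅ ∨ t = {false} ∨ t = {true} ∨ t = Set.univ := by
  by_cases h1 : true ∈ t <;> by_cases h0 : false ∈ t
  · right; right; right; ext b; cases b <;> simp [h1, h0]
  · right; right; left; ext b; cases b <;> simp [h1, h0]
  · right; left; ext b; cases b <;> simp [h1, h0]
  · left; ext b; cases b <;> simp [h1, h0]

namespace ProbabilityTheory

variable {Ω : Type*} [MeasurableSpace Ω] {μ : Measure Ω}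

theorem indepFun_bool_of_measure_inter_preimage_singleton {β : Type*} [MeasurableSpace β]
    [IsProbabilityMeasure μ] {F : Ω → β} {S : Ω → Bool}
    (h : ∀ (s : Bool) (B : Set β), MeasurableSet B →
      μ (F ⁻¹' B ∩ S ⁻¹' {s}) = μ (F ⁻¹' B) * μ (S ⁻¹' {s})) :
    IndepFun F S μ := by
  rw [indepFun_iff_measure_inter_preimage_eq_mul]
  intro B t hB _
  rcases Bool.set_eq_empty_or_singleton_or_univ t with rfl | rfl | rfl | rfl
  · simp
  · exact h false B hB
  · exact h true B hB
  · simp only [Set.preimage_univ, Set.inter_univ, measure_univ, mul_one]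

theorem setIntegral_cond {A : Set Ω} (hA : MeasurableSet A) (f : Ω → ℝ) (t : Set Ω) :
    ∫ ω in t, f ω ∂μ[|A] = (μ.real A)⁻¹ * ∫ ω in A ∩ t, f ω ∂μ := by
  rw [cond, Measure.restrict_smul, integral_smul_measure, Measure.restrict_restrict' hA,
    Set.inter_comm, measureReal_def, ENNReal.toReal_inv, smul_eq_mul]

theorem measureReal_cond {A : Set Ω} (hA : MeasurableSet A) (t : Set Ω) :
    (μ[|A]).real t = (μ.real A)⁻¹ * μ.real (A ∩ t) := by
  rw [measureReal_def, cond_apply hA, ENNReal.toReal_mul, ENNReal.toReal_inv]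
  rfl

end ProbabilityTheory

section condMean

variable {Ω : Type*} [MeasurableSpace Ω] {μ : Measure Ω} {F : Ω → ℝ}

theorem condMean_eq_of_setIntegral_eq_mul {B : Set Ω} {c : ℝ}
    (h : ∫ ω in B, F ω ∂μ = c * μ.real B) (hB : μ.real B ≠ 0) : condMean μ F B = c := by
  rw [condMean, ← measureReal_def, h, mul_div_cancel_right₀ c hB]

theorem setIntegral_inter_preimage_eq_condMean_mul [IsFiniteMeasure μ] {β : Type*}
    [MeasurableSpace β] {A : Set Ω} {S : Ω → β} (hA : MeasurableSet A) (hA0 : μ A ≠ 0)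
    (hF : AEMeasurable F μ) (hS : Measurable S) (hind : IndepFun F S μ[|A]) {t : Set β}
    (ht : MeasurableSet t) :
    ∫ ω in A ∩ S ⁻¹' t, F ω ∂μ = condMean μ F A * μ.real (A ∩ S ⁻¹' t) := by
  have h := ((IndepFun_iff_Indep _ _ _).1 hind.symm).setIntegral_eq_mul (f := id) hS.comap_le
    (hF.mono_ac cond_absolutelyContinuous) ⟨t, ht, rfl⟩ aestronglyMeasurable_id
  have h_univ : ∫ ω, F ω ∂μ[|A] = (μ.real A)⁻¹ * ∫ ω in A, F ω ∂μ := by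
    simpa using setIntegral_cond hA F Set.univ
  simp only [id] at h
  rw [setIntegral_cond hA, h_univ, measureReal_cond hA] at h
  have hA0' : μ.real A ≠ 0 := (measureReal_ne_zero_iff (measure_ne_top μ A)).2 hA0
  rw [condMean, ← measureReal_def]
  field_simp at h ⊢
  simpa [mul_comm] using h

theorem condMean_eq_mixture [IsFiniteMeasure μ] {A E : Set Ω} {c₁ c₀ : ℝ}
    (hA : MeasurableSet A) (hE : μ E ≠ 0) (hF : IntegrableOn F E μ)
    (h₁ : ∫ ω in A ∩ E, F ω ∂μ = c₁ * μ.real (A ∩ E))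
    (h₀ : ∫ ω in Aᶜ ∩ E, F ω ∂μ = c₀ * μ.real (Aᶜ ∩ E)) :
    condMean μ F E = μ.real (A ∩ E) / μ.real E * c₁ + (1 - μ.real (A ∩ E) / μ.real E) * c₀ := by
  have hE_inter : E ∩ A = A ∩ E := Set.inter_comm E A
  have hE_sdiff : E \ A = Aᶜ ∩ E := by rw [Set.sdiff_eq, Set.inter_comm]
  have h_real : μ.real E = μ.real (A ∩ E) + μ.real (Aᶜ ∩ E) := by
    rw [← hE_inter, ← hE_sdiff, measureReal_inter_add_sdiff hA]
  have h_int : ∫ ω in E, F ω ∂μ = c₁ * μ.real (A ∩ E) + c₀ * μ.real (Aᶜ ∩ E) := by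
    rw [← h₁, ← h₀, ← hE_inter, ← hE_sdiff, integral_inter_add_sdiff hA hF]
  have hE_real : μ.real E ≠ 0 := (measureReal_ne_zero_iff (measure_ne_top μ E)).2 hE
  rw [condMean, ← measureReal_def, h_int]
  field_simp
  rw [h_real]
  ring

end condMean

theorem mixture_weight_eq {θ c₀ c₁ : ℝ} (hc : c₁ ≠ c₀) :
    (θ * c₁ + (1 - θ) * c₀ - c₀) / (c₁ - c₀) = θ := by
  rw [div_eq_iff (sub_ne_zero.mpr hc)]
  ring

theorem stmt_2_general {Ω : Type*} [MeasurableSpace Ω] (μ : Measure Ω) [IsProbabilityMeasure μ]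
    {d : ℕ} (X : Ω → (Fin d → ℝ)) (Y S : Ω → Bool) (g : (Fin d → ℝ) → ℝ)
    (hY : Measurable Y) (hS : Measurable S)
    (hint : Integrable (fun ω => g (X ω)) μ)
    -- weak prior shift: `g(X)` is conditionally independent of `S` given `Y`
    (hwps : ∀ j : Bool, μ {ω | Y ω = j} ≠ 0 → ∀ (s : Bool) (B : Set ℝ),
      MeasurableSet B →
        μ[|{ω | Y ω = j}] ({ω | g (X ω) ∈ B} ∩ {ω | S ω = s})
          = μ[|{ω | Y ω = j}] {ω | g (X ω) ∈ B} * μ[|{ω | Y ω = j}] {ω | S ω = s})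
    (hS0 : μ {ω | S ω = false} ≠ 0)
    (hY0S1 : μ {ω | Y ω = false ∧ S ω = true} ≠ 0)
    (hY1S1 : μ {ω | Y ω = true ∧ S ω = true} ≠ 0)
    (hsep : condMean μ (fun ω => g (X ω)) {ω | Y ω = true ∧ S ω = true}
      ≠ condMean μ (fun ω => g (X ω)) {ω | Y ω = false ∧ S ω = true}) :
    let a1 : ℝ := condMean μ (fun ω => g (X ω)) {ω | Y ω = true ∧ S ω = true}
    let a0 : ℝ := condMean μ (fun ω => g (X ω)) {ω | Y ω = false ∧ S ω = true}
    let e0 : ℝ := condMean μ (fun ω => g (X ω)) {ω | S ω = false}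
    let θ : ℝ := (μ ({ω | Y ω = true} ∩ {ω | S ω = false})).toReal
      / (μ {ω | S ω = false}).toReal
    θ = (e0 - a0) / (a1 - a0) ∧
      (e0 - a0) / (a1 - a0) ∈ Set.Icc (0 : ℝ) 1 ∧
      max 0 (min 1 ((e0 - a0) / (a1 - a0))) = (e0 - a0) / (a1 - a0) := by
  intro a1 a0 e0 θ
  set m : Bool → ℝ := fun j => condMean μ (fun ω => g (X ω)) {ω | Y ω = j}
  have hA : ∀ j, MeasurableSet {ω | Y ω = j} := fun j => hY (measurableSet_singleton j)
  have h_within : ∀ j, μ {ω | Y ω = j} ≠ 0 → ∀ s : Bool, ∫ ω in {ω | Y ω = j} ∩ S ⁻¹' {s},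
      g (X ω) ∂μ = m j * μ.real ({ω | Y ω = j} ∩ S ⁻¹' {s}) := fun j hj s =>
    have := cond_isProbabilityMeasure hj
    setIntegral_inter_preimage_eq_condMean_mul (hA j) hj hint.aemeasurable hS
      (indepFun_bool_of_measure_inter_preimage_singleton (hwps j hj)) (measurableSet_singleton s)
  have hY1 : μ {ω | Y ω = true} ≠ 0 := fun h => hY1S1 (measure_mono_null (fun _ hω => hω.1) h)
  have hY0 : μ {ω | Y ω = false} ≠ 0 := fun h => hY0S1 (measure_mono_null (fun _ hω => hω.1) h)
  have ha1 : a1 = m true := condMean_eq_of_setIntegral_eq_mul (h_within true hY1 true)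
    ((measureReal_ne_zero_iff (measure_ne_top μ _)).2 hY1S1)
  have ha0 : a0 = m false := condMean_eq_of_setIntegral_eq_mul (h_within false hY0 true)
    ((measureReal_ne_zero_iff (measure_ne_top μ _)).2 hY0S1)
  have hY_compl : {ω | Y ω = true}ᶜ = {ω | Y ω = false} := by ext; simp
  have he0 : e0 = θ * m true + (1 - θ) * m false :=
    condMean_eq_mixture (hA true) hS0 hint.integrableOn (h_within true hY1 false)
      (hY_compl ▸ h_within false hY0 false)
  have hratio : (e0 - a0) / (a1 - a0) = θ := by
    rw [he0, ha1, ha0]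
    exact mixture_weight_eq (ha1 ▸ ha0 ▸ hsep)
  have hθ : θ ∈ Set.Icc (0 : ℝ) 1 :=
    ⟨div_nonneg measureReal_nonneg measureReal_nonneg,
      div_le_one_of_le₀ (measureReal_mono Set.inter_subset_right) measureReal_nonneg⟩
  rw [hratio, min_eq_right hθ.2, max_eq_right hθ.1]
  exact ⟨rfl, hθ, rfl⟩

/-- Fisher consistency of the (trimmed and untrimmed) ratio
estimator: under weak prior shift, `P(Y = 1 | S = 0)` equals the population
ratio, which lies in `[0,1]` and is hence unchanged by trimming. -/
theorem stmt_2 {Ω : Type*} [MeasurableSpace Ω] (μ : Measure Ω) [IsProbabilityMeasure μ]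
    {d : ℕ} (X : Ω → (Fin d → ℝ)) (Y S : Ω → Bool) (g : (Fin d → ℝ) → ℝ)
    (hX : Measurable X) (hY : Measurable Y) (hS : Measurable S) (hg : Measurable g)
    (hint : Integrable (fun ω => g (X ω)) μ)
    -- weak prior shift: `g(X)` is conditionally independent of `S` given `Y`
    (hwps : ∀ j : Bool, μ {ω | Y ω = j} ≠ 0 → ∀ (s : Bool) (B : Set ℝ),
      MeasurableSet B →
        μ[|{ω | Y ω = j}] ({ω | g (X ω) ∈ B} ∩ {ω | S ω = s})
          = μ[|{ω | Y ω = j}] {ω | g (X ω) ∈ B} * μ[|{ω | Y ω = j}] {ω | S ω = s})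
    (hS0 : μ {ω | S ω = false} ≠ 0)
    (hY0S1 : μ {ω | Y ω = false ∧ S ω = true} ≠ 0)
    (hY1S1 : μ {ω | Y ω = true ∧ S ω = true} ≠ 0)
    (hsep : condMean μ (fun ω => g (X ω)) {ω | Y ω = true ∧ S ω = true}
      ≠ condMean μ (fun ω => g (X ω)) {ω | Y ω = false ∧ S ω = true}) :
    let a1 : ℝ := condMean μ (fun ω => g (X ω)) {ω | Y ω = true ∧ S ω = true}
    let a0 : ℝ := condMean μ (fun ω => g (X ω)) {ω | Y ω = false ∧ S ω = true}
    let e0 : ℝ := condMean μ (fun ω => g (X ω)) {ω | S ω = false}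
    let θ : ℝ := (μ ({ω | Y ω = true} ∩ {ω | S ω = false})).toReal
      / (μ {ω | S ω = false}).toReal
    θ = (e0 - a0) / (a1 - a0) ∧
      (e0 - a0) / (a1 - a0) ∈ Set.Icc (0 : ℝ) 1 ∧
      max 0 (min 1 ((e0 - a0) / (a1 - a0))) = (e0 - a0) / (a1 - a0) :=
  stmt_2_general μ X Y S g hY hS hint hwps hS0 hY0S1 hY1S1 hsep
end

section
/- Let Z_1 and Z_2 be square-integrable real random variables on a probability space with μ_2 := E[Z_2] ≠ 0, μ_1 := E[Z_1], and μ_1/μ_2 ∈ [0,1]. Define T = max(0, min(1, Z_1/Z_2)) (with the convention Z_1/Z_2 = 0 on the event Z_2 = 0). Then for every ε_1, ε_2 ∈ (0,1): E[(T − μ_1/μ_2)^2] ≤ 4(|μ_1| + ε_1) · max(Var[Z_1], Var[Z_2]) / min(1, (1 − ε_2)^4 μ_2^4) + ε_1^{-2} Var[Z_1] + (ε_2 μ_2)^{-2} Var[Z_2]. -/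
/-!
Write `d = (1 - ε₂)|μ₂|`. Where `|Z₂ - μ₂| ≤ ε₂|μ₂|` we have `|Z₂| ≥ d`; clamping to `[0,1]` is
1-Lipschitz and fixes `μ₁/μ₂`, and
`Z₁/Z₂ - μ₁/μ₂ = (Z₁ - μ₁)/Z₂ - μ₁(Z₂ - μ₂)/(μ₂ Z₂)`, so `(T - μ₁/μ₂)²` is at most
`2(Z₁ - μ₁)²/d² + 2μ₁²(Z₂ - μ₂)²/(d²μ₂²)`. Elsewhere `(T - μ₁/μ₂)² ≤ 1 ≤ (Z₂ - μ₂)²/(ε₂μ₂)²`.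
Integrating this pointwise bound gives a combination of the two variances, and elementary
inequalities, using `|μ₁| ≤ |μ₂|`, turn its coefficients into the stated ones.
-/

open MeasureTheory ProbabilityTheory

lemma sq_clamp_sub_le {r : ℝ} (hr : r ∈ Set.Icc (0 : ℝ) 1) (t : ℝ) :
    (max 0 (min 1 t) - r) ^ 2 ≤ (t - r) ^ 2 := by
  have hclamp : LipschitzWith 1 fun s : ℝ => max 0 (min 1 s) :=
    (LipschitzWith.id.const_min 1).const_max 0
  have h := hclamp.dist_le_mul t r
  simp only [Real.dist_eq, NNReal.coe_one, one_mul, min_eq_right hr.2,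
    max_eq_right hr.1] at h
  exact sq_le_sq.mpr h

lemma sq_clamp_sub_le_one {r : ℝ} (hr : r ∈ Set.Icc (0 : ℝ) 1) (t : ℝ) :
    (max 0 (min 1 t) - r) ^ 2 ≤ 1 := by
  have h0 : 0 ≤ max 0 (min 1 t) := le_max_left _ _
  have h1 : max 0 (min 1 t) ≤ 1 := max_le zero_le_one (min_le_left _ _)
  nlinarith [hr.1, hr.2]

lemma sq_div_sub_div_le {x y a b d : ℝ} (hb : b ≠ 0) (hd : 0 < d) (hdy : d ≤ |y|) :
    (x / y - a / b) ^ 2 ≤ 2 / d ^ 2 * (x - a) ^ 2 + 2 * a ^ 2 / (d ^ 2 * b ^ 2) * (y - b) ^ 2 := by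
  have hy : y ≠ 0 := abs_pos.mp (hd.trans_le hdy)
  have hy2 : d ^ 2 ≤ y ^ 2 := by simpa using pow_le_pow_left₀ hd.le hdy 2
  have hsplit : x / y - a / b = (x - a) / y - a * (y - b) / (b * y) := by
    field_simp; ring
  calc (x / y - a / b) ^ 2
      ≤ 2 * ((x - a) / y) ^ 2 + 2 * (a * (y - b) / (b * y)) ^ 2 := by
        rw [hsplit]; nlinarith [sq_nonneg ((x - a) / y + a * (y - b) / (b * y))]
    _ = 2 * (x - a) ^ 2 / y ^ 2 + 2 * (a ^ 2 * (y - b) ^ 2) / (b ^ 2 * y ^ 2) := by ring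
    _ ≤ 2 * (x - a) ^ 2 / d ^ 2 + 2 * (a ^ 2 * (y - b) ^ 2) / (b ^ 2 * d ^ 2) := by
        gcongr
    _ = _ := by ring

lemma sq_clamp_div_sub_div_le {x y a b ε : ℝ} (hb : b ≠ 0) (hr : a / b ∈ Set.Icc (0 : ℝ) 1)
    (hε : ε ∈ Set.Ioo (0 : ℝ) 1) :
    (max 0 (min 1 (x / y)) - a / b) ^ 2 ≤
      2 / ((1 - ε) * |b|) ^ 2 * (x - a) ^ 2 +
        (2 * a ^ 2 / (((1 - ε) * |b|) ^ 2 * b ^ 2) + ((ε * b) ^ 2)⁻¹) * (y - b) ^ 2 := by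
  have hd : 0 < (1 - ε) * |b| := mul_pos (by linarith [hε.2]) (abs_pos.mpr hb)
  have hεb : 0 < (ε * b) ^ 2 := by have := hε.1; positivity
  have hextra : 0 ≤ ((ε * b) ^ 2)⁻¹ * (y - b) ^ 2 := by positivity
  by_cases hy : |y - b| ≤ ε * |b|
  · have hdy : (1 - ε) * |b| ≤ |y| := by
      have := abs_sub_abs_le_abs_sub b y
      rw [abs_sub_comm] at this
      linarith
    have := (sq_clamp_sub_le hr (x / y)).trans (sq_div_sub_div_le (x := x) (a := a) hb hd hdy)
    linarith
  · have hdev : (ε * b) ^ 2 ≤ (y - b) ^ 2 := by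
      rw [← sq_abs (y - b), mul_pow, ← sq_abs b, ← mul_pow]
      exact pow_le_pow_left₀ (by have := hε.1; positivity) (not_le.mp hy).le 2
    have hone : 1 ≤ ((ε * b) ^ 2)⁻¹ * (y - b) ^ 2 := by
      rw [inv_mul_eq_div, one_le_div hεb]; exact hdev
    have := sq_clamp_sub_le_one hr (x / y)
    have : 0 ≤ 2 / ((1 - ε) * |b|) ^ 2 * (x - a) ^ 2 := by positivity
    have : 0 ≤ 2 * a ^ 2 / (((1 - ε) * |b|) ^ 2 * b ^ 2) * (y - b) ^ 2 := by positivity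
    linarith

lemma integral_le_mul_variance_add_mul_variance {Ω : Type*} [MeasurableSpace Ω] {μ : Measure Ω}
    [IsFiniteMeasure μ] {f X Y : Ω → ℝ} {A B : ℝ} (hX : MemLp X 2 μ) (hY : MemLp Y 2 μ)
    (hf0 : ∀ ω, 0 ≤ f ω) (hf : ∀ ω, f ω ≤ A * (X ω - μ[X]) ^ 2 + B * (Y ω - μ[Y]) ^ 2) :
    ∫ ω, f ω ∂μ ≤ A * variance X μ + B * variance Y μ := by
  have hXi : Integrable (fun ω => (X ω - μ[X]) ^ 2) μ :=
    (hX.sub (memLp_const _)).integrable_sq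
  have hYi : Integrable (fun ω => (Y ω - μ[Y]) ^ 2) μ :=
    (hY.sub (memLp_const _)).integrable_sq
  rw [variance_eq_integral hX.aemeasurable, variance_eq_integral hY.aemeasurable,
    ← integral_const_mul, ← integral_const_mul, ← integral_add (hXi.const_mul A) (hYi.const_mul B)]
  exact integral_mono_of_nonneg (.of_forall hf0) ((hXi.const_mul A).add (hYi.const_mul B))
    (.of_forall hf)

lemma inv_pow_three_le_inv_min_one {d : ℝ} (hd : 0 < d) : (d ^ 3)⁻¹ ≤ (min 1 (d ^ 4))⁻¹ := by
  rcases le_total d 1 with h | h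
  · rw [min_eq_right (pow_le_one₀ hd.le h)]
    exact inv_anti₀ (by positivity) (pow_le_pow_of_le_one hd.le h (by norm_num))
  · rw [min_eq_left (one_le_pow₀ h), inv_one]
    exact inv_le_one_of_one_le₀ (one_le_pow₀ h)

lemma two_div_sq_le {d ε : ℝ} (hd : 0 < d) (hε : 0 < ε) (hε1 : ε ≤ 1) :
    2 / d ^ 2 ≤ (ε ^ 2)⁻¹ + 4 * ε / min 1 (d ^ 4) := by
  have h0 : 0 ≤ 4 * ε / min 1 (d ^ 4) := by positivity
  by_cases hcase : 2 * ε ^ 2 ≤ d ^ 2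
  · have : 2 / d ^ 2 ≤ (ε ^ 2)⁻¹ := by
      rw [div_le_iff₀ (by positivity), inv_mul_eq_div, le_div_iff₀ (by positivity)]
      linarith
    linarith
  · have : 0 ≤ (ε ^ 2)⁻¹ := by positivity
    suffices 2 / d ^ 2 ≤ 4 * ε / min 1 (d ^ 4) by linarith
    rcases le_total d 1 with h | h
    · rw [min_eq_right (pow_le_one₀ hd.le h), div_le_div_iff₀ (by positivity) (by positivity)]
      have : d ^ 2 ≤ 2 * ε := by nlinarith
      nlinarith [pow_pos hd 2]
    · rw [min_eq_left (one_le_pow₀ h), div_one, div_le_iff₀ (by positivity)]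
      nlinarith [one_le_pow₀ (n := 2) h]

lemma sq_div_sq_mul_sq_le {a b d : ℝ} (hd : 0 < d) (hdb : d ≤ |b|) (hab : |a| ≤ |b|) :
    a ^ 2 / (d ^ 2 * b ^ 2) ≤ |a| / min 1 (d ^ 4) := by
  have hb : 0 < |b| := hd.trans_le hdb
  calc a ^ 2 / (d ^ 2 * b ^ 2) = |a| * (|a| / |b|) / (d ^ 2 * |b|) := by
        rw [← sq_abs a, ← sq_abs b]; field_simp
    _ ≤ |a| * 1 / (d ^ 2 * d) := by
        gcongr
        exact div_le_one_of_le₀ hab hb.le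
    _ = |a| * (d ^ 3)⁻¹ := by ring
    _ ≤ |a| * (min 1 (d ^ 4))⁻¹ :=
        mul_le_mul_of_nonneg_left (inv_pow_three_le_inv_min_one hd) (abs_nonneg a)
    _ = _ := by ring

lemma two_div_sq_mul_add_le {a b d ε V₁ V₂ : ℝ} (hd : 0 < d) (hdb : d ≤ |b|) (hab : |a| ≤ |b|)
    (hε : 0 < ε) (hε1 : ε ≤ 1) (hV₁ : 0 ≤ V₁) (hV₂ : 0 ≤ V₂) :
    2 / d ^ 2 * V₁ + 2 * a ^ 2 / (d ^ 2 * b ^ 2) * V₂ ≤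
      4 * (|a| + ε) * max V₁ V₂ / min 1 (d ^ 4) + (ε ^ 2)⁻¹ * V₁ := by
  set M := max V₁ V₂
  set D := min 1 (d ^ 4)
  have hD : 0 < D := lt_min one_pos (by positivity)
  have hM : 0 ≤ M := hV₁.trans (le_max_left _ _)
  calc 2 / d ^ 2 * V₁ + 2 * a ^ 2 / (d ^ 2 * b ^ 2) * V₂
      ≤ ((ε ^ 2)⁻¹ + 4 * ε / D) * V₁ + 2 * (|a| / D) * V₂ := by
        rw [mul_div_assoc]
        gcongr ?_ * V₁ + 2 * ?_ * V₂
        · exact two_div_sq_le hd hε hε1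
        · exact sq_div_sq_mul_sq_le hd hdb hab
    _ ≤ ((ε ^ 2)⁻¹ * V₁ + 4 * ε / D * M) + 4 * (|a| / D) * M := by
        rw [add_mul]
        gcongr
        · exact le_max_left _ _
        · norm_num
        · exact le_max_right _ _
    _ = _ := by ring

theorem stmt_3_general {Ω : Type*} [MeasurableSpace Ω] (μ : Measure Ω) [IsProbabilityMeasure μ]
    (Z1 Z2 : Ω → ℝ)
    (hL1 : MemLp Z1 2 μ) (hL2 : MemLp Z2 2 μ)
    (hμ2 : (∫ ω, Z2 ω ∂μ) ≠ 0)
    (hratio : (∫ ω, Z1 ω ∂μ) / (∫ ω, Z2 ω ∂μ) ∈ Set.Icc (0 : ℝ) 1)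
    (ε1 ε2 : ℝ) (hε1 : ε1 ∈ Set.Ioo (0 : ℝ) 1) (hε2 : ε2 ∈ Set.Ioo (0 : ℝ) 1) :
    (∫ ω, (max 0 (min 1 (Z1 ω / Z2 ω)) - (∫ ω', Z1 ω' ∂μ) / (∫ ω', Z2 ω' ∂μ)) ^ 2 ∂μ) ≤
      4 * (|∫ ω, Z1 ω ∂μ| + ε1) * max (variance Z1 μ) (variance Z2 μ) /
          min 1 ((1 - ε2) ^ 4 * (∫ ω, Z2 ω ∂μ) ^ 4)
        + (ε1 ^ 2)⁻¹ * variance Z1 μ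
        + ((ε2 * ∫ ω, Z2 ω ∂μ) ^ 2)⁻¹ * variance Z2 μ := by
  set μ₁ := ∫ ω, Z1 ω ∂μ
  set μ₂ := ∫ ω, Z2 ω ∂μ
  set d := (1 - ε2) * |μ₂|
  have hd : 0 < d := mul_pos (by linarith [hε2.2]) (abs_pos.mpr hμ2)
  have hdμ₂ : d ≤ |μ₂| := mul_le_of_le_one_left (abs_nonneg _) (by linarith [hε2.1])
  have hμ₁μ₂ : |μ₁| ≤ |μ₂| := by
    have h : |μ₁ / μ₂| ≤ 1 := abs_le.mpr ⟨by linarith [hratio.1], hratio.2⟩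
    rwa [abs_div, div_le_one (abs_pos.mpr hμ2)] at h
  have hd4 : (1 - ε2) ^ 4 * μ₂ ^ 4 = d ^ 4 := by rw [mul_pow, (by decide : Even 4).pow_abs]
  have hmoment := integral_le_mul_variance_add_mul_variance hL1 hL2 (fun _ => sq_nonneg _)
    (fun ω => sq_clamp_div_sub_div_le (x := Z1 ω) (y := Z2 ω) hμ2 hratio hε2)
  have hcoeff := two_div_sq_mul_add_le hd hdμ₂ hμ₁μ₂ hε1.1 hε1.2.le
    (variance_nonneg Z1 μ) (variance_nonneg Z2 μ)
  rw [hd4]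
  linarith

/-- moment bound for the trimmed ratio of two square-integrable
random variables, compared to the ratio of their expectations. -/
theorem stmt_3 {Ω : Type*} [MeasurableSpace Ω] (μ : Measure Ω) [IsProbabilityMeasure μ]
    (Z1 Z2 : Ω → ℝ) (hZ1 : Measurable Z1) (hZ2 : Measurable Z2)
    (hL1 : MemLp Z1 2 μ) (hL2 : MemLp Z2 2 μ)
    (hμ2 : (∫ ω, Z2 ω ∂μ) ≠ 0)
    (hratio : (∫ ω, Z1 ω ∂μ) / (∫ ω, Z2 ω ∂μ) ∈ Set.Icc (0 : ℝ) 1)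
    (ε1 ε2 : ℝ) (hε1 : ε1 ∈ Set.Ioo (0 : ℝ) 1) (hε2 : ε2 ∈ Set.Ioo (0 : ℝ) 1) :
    (∫ ω, (max 0 (min 1 (Z1 ω / Z2 ω)) - (∫ ω', Z1 ω' ∂μ) / (∫ ω', Z2 ω' ∂μ)) ^ 2 ∂μ) ≤
      4 * (|∫ ω, Z1 ω ∂μ| + ε1) * max (variance Z1 μ) (variance Z2 μ) /
          min 1 ((1 - ε2) ^ 4 * (∫ ω, Z2 ω ∂μ) ^ 4)
        + (ε1 ^ 2)⁻¹ * variance Z1 μ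
        + ((ε2 * ∫ ω, Z2 ω ∂μ) ^ 2)⁻¹ * variance Z2 μ :=
  stmt_3_general μ Z1 Z2 hL1 hL2 hμ2 hratio ε1 ε2 hε1 hε2
end

section
/- Let ε, K > 0, q ∈ (0,1), θ ∈ [0,1], and let (ν_0, ν_1) be probability measures on ℝ with ∫ t^2 dν_j(t) ≤ K for j ∈ {0,1} and |μ_1 − μ_0| ≥ ε, where μ_j := ∫ t dν_j(t). For each pair (n_L, n_U) generate labeled pairs (W_i^L, Y_i), i = 1,…,n_L, i.i.d. with Y_i ~ Bernoulli(q) and W_i^L | Y_i = j ~ ν_j, and unlabeled W_u^U, u = 1,…,n_U, i.i.d. ~ θ ν_1 + (1−θ) ν_0, independent of the labeled sample, and let θ̂_R = max(0, min(1, (W̄^U − W̄_0)/(W̄_1 − W̄_0))) (set to 0 when some label class is empty or the denominator is zero), where W̄^U is the unlabeled sample mean and W̄_j the mean of the labeled W's with label j. Then as min(n_L, n_U) → ∞, E[(θ̂_R − θ)^2] → 0 and θ̂_R → θ in probability; that is, the trimmed ratio estimator is consistent in L² and in probability. -/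
open MeasureTheory ProbabilityTheory ENNReal Finset Filter Topology
open scoped Classical

/-- The law of one labeled pair `(W, Y)`: `Y ~ Bernoulli(q)` and `W | Y = j ~ νj`. -/
noncomputable def labeledLaw {E : Type*} [MeasurableSpace E] (ν0 ν1 : Measure E) (q : ℝ) :
    Measure (E × Bool) :=
  ENNReal.ofReal (1 - q) • ν0.prod (Measure.dirac false)
    + ENNReal.ofReal q • ν1.prod (Measure.dirac true)

/-- The law of one unlabeled observation: the mixture `θ ν1 + (1-θ) ν0`. -/
noncomputable def mixLaw {E : Type*} [MeasurableSpace E] (ν0 ν1 : Measure E) (θ : ℝ) :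
    Measure E :=
  ENNReal.ofReal (1 - θ) • ν0 + ENNReal.ofReal θ • ν1

/-- The joint law of the data: `n_L` i.i.d. labeled pairs and, independently,
`n_U` i.i.d. unlabeled observations drawn from the mixture. -/
noncomputable def dataLaw {E : Type*} [MeasurableSpace E] (nL nU : ℕ)
    (ν0 ν1 : Measure E) (q θ : ℝ) : Measure ((Fin nL → E × Bool) × (Fin nU → E)) :=
  (Measure.pi fun _ : Fin nL => labeledLaw ν0 ν1 q).prod
    (Measure.pi fun _ : Fin nU => mixLaw ν0 ν1 θ)

/-- The trimmed ratio estimator `max(0, min(1, (W̄ᵁ - W̄₀)/(W̄₁ - W̄₀)))`,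
set to `0` when a label class is empty or the denominator vanishes. -/
noncomputable def ratioEst {nL nU : ℕ} (L : Fin nL → ℝ × Bool) (U : Fin nU → ℝ) : ℝ :=
  let A1 := Finset.univ.filter fun i => (L i).2 = true
  let A0 := Finset.univ.filter fun i => (L i).2 = false
  let m1 := (∑ i ∈ A1, (L i).1) / A1.card
  let m0 := (∑ i ∈ A0, (L i).1) / A0.card
  let mU := (∑ u, U u) / nU
  if A1.Nonempty ∧ A0.Nonempty ∧ m1 - m0 ≠ 0 then
    max 0 (min 1 ((mU - m0) / (m1 - m0)))
  else 0

/-!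
The estimator is a continuous function of five empirical means: the class-wise sums and
frequencies of the labeled sample and the mean of the unlabeled sample. At their population
values `(q μ₁, q, (1 - q) μ₀, 1 - q, (1 - θ) μ₀ + θ μ₁)` this function equals `θ`, and it is
continuous there because `0 < q < 1` and `μ₁ ≠ μ₀`. Chebyshev's inequality makes each empirical
mean converge in probability, so `θ̂_R → θ` in probability; as `θ̂_R` and `θ` lie in `[0, 1]`,
convergence in `L²` follows.
-/

noncomputable def empiricalMean {α : Type*} {n : ℕ} (f : α → ℝ) (x : Fin n → α) : ℝ :=
  (∑ i, f (x i)) / n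

section WeakLaw

variable {α : Type*} [MeasurableSpace α] {μ : Measure α} [IsProbabilityMeasure μ] {f : α → ℝ}

lemma measure_pi_abs_empiricalMean_sub_ge_le (hf : MemLp f 2 μ) {n : ℕ} (hn : 0 < n)
    {δ : ℝ} (hδ : 0 < δ) :
    Measure.pi (fun _ : Fin n => μ) {x | δ ≤ |empiricalMean f x - μ[f]|}
      ≤ ENNReal.ofReal (Var[f; μ] / (n * δ ^ 2)) := by
  set S : (Fin n → α) → ℝ := ∑ i, fun x => f (x i)
  have hS : MemLp S 2 (Measure.pi fun _ : Fin n => μ) :=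
    memLp_finsetSum' _ fun i _ => hf.comp_measurePreserving (measurePreserving_eval _ i)
  have hmean : ∫ x, S x ∂(Measure.pi fun _ : Fin n => μ) = n * μ[f] := by
    simp only [S, Finset.sum_apply]
    rw [integral_finsetSum _ fun i _ => integrable_comp_eval (hf.integrable one_le_two)]
    simp [integral_comp_eval (μ := fun _ : Fin n => μ) hf.aestronglyMeasurable]
  have hn' : (0 : ℝ) < n := Nat.cast_pos.2 hn
  have hsub : {x | δ ≤ |empiricalMean f x - μ[f]|} ⊆
      {x | n * δ ≤ |S x - ∫ x, S x ∂(Measure.pi fun _ : Fin n => μ)|} := by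
    intro x hx
    have hSx : S x - n * μ[f] = n * (empiricalMean f x - μ[f]) := by
      simp only [S, empiricalMean, Finset.sum_apply]
      field_simp
    simp only [Set.mem_ofPred_eq, hmean, hSx, abs_mul, abs_of_pos hn'] at hx ⊢
    gcongr
  calc _ ≤ _ := measure_mono hsub
    _ ≤ ENNReal.ofReal (Var[S; Measure.pi fun _ : Fin n => μ] / (n * δ) ^ 2) :=
      meas_ge_le_variance_div_sq hS (by positivity)
    _ = ENNReal.ofReal (Var[f; μ] / (n * δ ^ 2)) := by
      rw [variance_sum_pi fun _ => hf]
      congr 1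
      simp only [Finset.sum_const, Finset.card_univ, Fintype.card_fin, nsmul_eq_mul]
      field_simp

theorem tendsto_measure_pi_abs_empiricalMean_sub_ge (hf : MemLp f 2 μ) {δ : ℝ} (hδ : 0 < δ) :
    Tendsto (fun n : ℕ => Measure.pi (fun _ : Fin n => μ) {x | δ ≤ |empiricalMean f x - μ[f]|})
      atTop (𝓝 0) := by
  have hbound : Tendsto (fun n : ℕ => ENNReal.ofReal (Var[f; μ] / δ ^ 2 / n)) atTop (𝓝 0) := by
    simpa using ENNReal.tendsto_ofReal (tendsto_const_div_atTop_nhds_zero_nat (Var[f; μ] / δ ^ 2))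
  refine tendsto_of_tendsto_of_tendsto_of_le_of_le' tendsto_const_nhds hbound
    (Eventually.of_forall fun _ => zero_le) ?_
  filter_upwards [eventually_gt_atTop 0] with n hn
  rw [div_div, mul_comm _ (n : ℝ)]
  exact measure_pi_abs_empiricalMean_sub_ge_le hf hn hδ

end WeakLaw

section Laws

variable {E : Type*} [MeasurableSpace E] {ν0 ν1 : Measure E} {q θ : ℝ}

lemma isProbabilityMeasure_labeledLaw [IsProbabilityMeasure ν0] [IsProbabilityMeasure ν1]
    (hq : q ∈ Set.Icc (0 : ℝ) 1) : IsProbabilityMeasure (labeledLaw ν0 ν1 q) := by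
  constructor
  simp [labeledLaw, ← ENNReal.ofReal_add (sub_nonneg.2 hq.2) hq.1]

lemma isProbabilityMeasure_mixLaw [IsProbabilityMeasure ν0] [IsProbabilityMeasure ν1]
    (hθ : θ ∈ Set.Icc (0 : ℝ) 1) : IsProbabilityMeasure (mixLaw ν0 ν1 θ) := by
  constructor
  simp [mixLaw, ← ENNReal.ofReal_add (sub_nonneg.2 hθ.2) hθ.1]

lemma isProbabilityMeasure_dataLaw [IsProbabilityMeasure ν0] [IsProbabilityMeasure ν1]
    (hq : q ∈ Set.Icc (0 : ℝ) 1) (hθ : θ ∈ Set.Icc (0 : ℝ) 1) (nL nU : ℕ) :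
    IsProbabilityMeasure (dataLaw nL nU ν0 ν1 q θ) := by
  have := isProbabilityMeasure_labeledLaw (ν0 := ν0) (ν1 := ν1) hq
  have := isProbabilityMeasure_mixLaw (ν0 := ν0) (ν1 := ν1) hθ
  unfold dataLaw
  infer_instance

lemma labeledLaw_eq_map [SFinite ν0] [SFinite ν1] :
    labeledLaw ν0 ν1 q = ENNReal.ofReal (1 - q) • ν0.map (fun w => (w, false))
      + ENNReal.ofReal q • ν1.map (fun w => (w, true)) := by
  rw [labeledLaw, Measure.prod_dirac, Measure.prod_dirac]

lemma integrable_labeledLaw [SFinite ν0] [SFinite ν1] {f : E × Bool → ℝ}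
    (h0 : Integrable (fun w => f (w, false)) ν0) (h1 : Integrable (fun w => f (w, true)) ν1) :
    Integrable f (labeledLaw ν0 ν1 q) := by
  rw [labeledLaw_eq_map, integrable_add_measure]
  exact ⟨((measurableEmbedding_prod_mk_right false).integrable_map_iff.2 h0).smul_measure
      ENNReal.ofReal_ne_top,
    ((measurableEmbedding_prod_mk_right true).integrable_map_iff.2 h1).smul_measure
      ENNReal.ofReal_ne_top⟩

lemma integral_labeledLaw [SFinite ν0] [SFinite ν1] {f : E × Bool → ℝ}
    (hq : q ∈ Set.Icc (0 : ℝ) 1) (h0 : Integrable (fun w => f (w, false)) ν0)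
    (h1 : Integrable (fun w => f (w, true)) ν1) :
    ∫ r, f r ∂(labeledLaw ν0 ν1 q)
      = (1 - q) * ∫ w, f (w, false) ∂ν0 + q * ∫ w, f (w, true) ∂ν1 := by
  have i0 := ((measurableEmbedding_prod_mk_right false).integrable_map_iff.2 h0).smul_measure
    (ENNReal.ofReal_ne_top (r := 1 - q))
  have i1 := ((measurableEmbedding_prod_mk_right true).integrable_map_iff.2 h1).smul_measure
    (ENNReal.ofReal_ne_top (r := q))
  rw [labeledLaw_eq_map, integral_add_measure i0 i1, integral_smul_measure,
    integral_smul_measure, (measurableEmbedding_prod_mk_right false).integral_map,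
    (measurableEmbedding_prod_mk_right true).integral_map,
    ENNReal.toReal_ofReal (sub_nonneg.2 hq.2), ENNReal.toReal_ofReal hq.1, smul_eq_mul,
    smul_eq_mul]

lemma integral_mixLaw {g : E → ℝ} (hθ : θ ∈ Set.Icc (0 : ℝ) 1) (h0 : Integrable g ν0)
    (h1 : Integrable g ν1) :
    ∫ w, g w ∂(mixLaw ν0 ν1 θ) = (1 - θ) * ∫ w, g w ∂ν0 + θ * ∫ w, g w ∂ν1 := by
  rw [mixLaw, integral_add_measure (h0.smul_measure ENNReal.ofReal_ne_top)
    (h1.smul_measure ENNReal.ofReal_ne_top), integral_smul_measure, integral_smul_measure,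
    ENNReal.toReal_ofReal (sub_nonneg.2 hθ.2), ENNReal.toReal_ofReal hθ.1, smul_eq_mul,
    smul_eq_mul]

lemma memLp_two_mixLaw {g : E → ℝ} (h0 : MemLp g 2 ν0) (h1 : MemLp g 2 ν1) :
    MemLp g 2 (mixLaw ν0 ν1 θ) := by
  rw [mixLaw, memLp_two_iff_integrable_sq
    ((h0.1.smul_measure _).add_measure (h1.1.smul_measure _)), integrable_add_measure]
  exact ⟨h0.integrable_sq.smul_measure ENNReal.ofReal_ne_top,
    h1.integrable_sq.smul_measure ENNReal.ofReal_ne_top⟩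

end Laws

def classPart (b : Bool) (g : ℝ → ℝ) (r : ℝ × Bool) : ℝ := if r.2 = b then g r.1 else 0

section ClassPart

variable {ν0 ν1 : Measure ℝ} [SFinite ν0] [SFinite ν1] {q : ℝ} {g : ℝ → ℝ}

lemma integral_classPart (hq : q ∈ Set.Icc (0 : ℝ) 1) (b : Bool) (h0 : Integrable g ν0)
    (h1 : Integrable g ν1) :
    ∫ r, classPart b g r ∂(labeledLaw ν0 ν1 q)
      = bif b then q * ∫ t, g t ∂ν1 else (1 - q) * ∫ t, g t ∂ν0 := by
  cases b <;> simp [classPart, integral_labeledLaw hq, h0, h1]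

lemma memLp_classPart (b : Bool) (hg : Measurable g) (h0 : MemLp g 2 ν0) (h1 : MemLp g 2 ν1) :
    MemLp (classPart b g) 2 (labeledLaw ν0 ν1 q) := by
  have hm : Measurable (classPart b g) :=
    Measurable.ite (measurable_snd (measurableSet_singleton b)) (hg.comp measurable_fst)
      measurable_const
  have hsq : (fun r => classPart b g r ^ 2) = classPart b (fun t => g t ^ 2) := by
    ext r
    by_cases h : r.2 = b <;> simp [classPart, h]
  rw [memLp_two_iff_integrable_sq hm.aestronglyMeasurable, hsq]
  apply integrable_labeledLaw <;> cases b <;> simp [classPart, h0.integrable_sq, h1.integrable_sq]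

end ClassPart

lemma memLp_two_id_of_lintegral_sq_lt_top {ν : Measure ℝ}
    (h : ∫⁻ t, ENNReal.ofReal (t ^ 2) ∂ν < ⊤) : MemLp id 2 ν := by
  rw [memLp_two_iff_integrable_sq aestronglyMeasurable_id]
  exact ⟨(measurable_id.pow_const 2).aestronglyMeasurable,
    (hasFiniteIntegral_iff_ofReal (ae_of_all _ fun t => sq_nonneg t)).2 h⟩

noncomputable def empiricalStats {nL nU : ℕ} (L : Fin nL → ℝ × Bool) (U : Fin nU → ℝ) :
    Fin 5 → ℝ :=
  ![empiricalMean (classPart true id) L, empiricalMean (classPart true 1) L,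
    empiricalMean (classPart false id) L, empiricalMean (classPart false 1) L,
    empiricalMean id U]

noncomputable def populationStats (q θ m0 m1 : ℝ) : Fin 5 → ℝ :=
  ![q * m1, q, (1 - q) * m0, 1 - q, (1 - θ) * m0 + θ * m1]

noncomputable def trimmedRatio (s : Fin 5 → ℝ) : ℝ :=
  max 0 (min 1 ((s 4 - s 2 / s 3) / (s 0 / s 1 - s 2 / s 3)))

/-- No condition on the denominator is needed: where it vanishes, `ratioEst` is `0` by
definition and `trimmedRatio` is `max 0 (min 1 (x / 0)) = 0`. -/
lemma ratioEst_eq_trimmedRatio {nL nU : ℕ} {L : Fin nL → ℝ × Bool} {U : Fin nU → ℝ}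
    (h1 : 0 < empiricalStats L U 1) (h0 : 0 < empiricalStats L U 3) :
    ratioEst L U = trimmedRatio (empiricalStats L U) := by
  have hcard (b : Bool) :
      ((univ.filter fun i => (L i).2 = b).card : ℝ) = ∑ i, classPart b 1 (L i) := by
    rw [Finset.natCast_card_filter]; rfl
  have hsum (b : Bool) :
      ∑ i ∈ univ.filter (fun i => (L i).2 = b), (L i).1 = ∑ i, classPart b id (L i) := by
    simp [Finset.sum_filter, classPart]
  have hnL : (nL : ℝ) ≠ 0 := by
    rintro h
    simp [empiricalStats, empiricalMean, h] at h1
  have hnonempty (b : Bool) (hb : 0 < empiricalMean (classPart b 1) L) :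
      (univ.filter fun i => (L i).2 = b).Nonempty := by
    have : 0 < ∑ i, classPart b 1 (L i) := (div_pos_iff_of_pos_right (by positivity)).1 hb
    rw [← Finset.card_pos]
    exact_mod_cast (hcard b).symm ▸ this
  have hratio (b : Bool) : empiricalMean (classPart b id) L / empiricalMean (classPart b 1) L
      = (∑ i, classPart b id (L i)) / ∑ i, classPart b 1 (L i) :=
    div_div_div_cancel_right₀ hnL _ _
  simp only [ratioEst, trimmedRatio, hcard, hsum, hnonempty true h1, hnonempty false h0,
    true_and]
  simp only [empiricalStats, Matrix.cons_val, hratio]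
  split_ifs with h
  · rfl
  · rw [not_not.1 h]
    simp

lemma trimmedRatio_populationStats {q θ m0 m1 : ℝ} (hq : q ∈ Set.Ioo (0 : ℝ) 1)
    (hθ : θ ∈ Set.Icc (0 : ℝ) 1) (hm : m1 ≠ m0) :
    trimmedRatio (populationStats q θ m0 m1) = θ := by
  simp only [trimmedRatio, populationStats, Matrix.cons_val]
  rw [mul_div_cancel_left₀ _ hq.1.ne', mul_div_cancel_left₀ _ (sub_pos.2 hq.2).ne',
    show (1 - θ) * m0 + θ * m1 - m0 = θ * (m1 - m0) by ring,
    mul_div_cancel_right₀ _ (sub_ne_zero.2 hm), min_eq_right hθ.2, max_eq_right hθ.1]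

lemma continuousAt_trimmedRatio_populationStats {q θ m0 m1 : ℝ} (hq : q ∈ Set.Ioo (0 : ℝ) 1)
    (hm : m1 ≠ m0) : ContinuousAt trimmedRatio (populationStats q θ m0 m1) := by
  have hq0 : q ≠ 0 := hq.1.ne'
  have hq1 : 1 - q ≠ 0 := (sub_pos.2 hq.2).ne'
  have hden : q * m1 / q - (1 - q) * m0 / (1 - q) ≠ 0 := by
    rw [mul_div_cancel_left₀ _ hq0, mul_div_cancel_left₀ _ hq1]
    exact sub_ne_zero.2 hm
  have hc (k : Fin 5) : ContinuousAt (fun s : Fin 5 → ℝ => s k) (populationStats q θ m0 m1) :=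
    (continuous_apply k).continuousAt
  exact continuousAt_const.max (continuousAt_const.min (((hc 4).sub ((hc 2).div (hc 3) hq1)).div
    (((hc 0).div (hc 1) hq0).sub ((hc 2).div (hc 3) hq1)) hden))

lemma exists_abs_ratioEst_sub_lt {q θ m0 m1 : ℝ} (hq : q ∈ Set.Ioo (0 : ℝ) 1)
    (hθ : θ ∈ Set.Icc (0 : ℝ) 1) (hm : m1 ≠ m0) {η : ℝ} (hη : 0 < η) :
    ∃ δ > 0, ∀ {nL nU : ℕ} (L : Fin nL → ℝ × Bool) (U : Fin nU → ℝ),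
      (∀ k, |empiricalStats L U k - populationStats q θ m0 m1 k| < δ) →
        |ratioEst L U - θ| < η := by
  have hclose : ∀ᶠ s in 𝓝 (populationStats q θ m0 m1),
      dist (trimmedRatio s) θ < η ∧ 0 < s 1 ∧ 0 < s 3 := by
    refine Eventually.and ?_ (Eventually.and ?_ ?_)
    · have hc := continuousAt_trimmedRatio_populationStats (θ := θ) hq hm
      rw [ContinuousAt, trimmedRatio_populationStats hq hθ hm] at hc
      exact hc (Metric.ball_mem_nhds θ hη)
    · exact (continuous_apply 1).continuousAt.eventually (lt_mem_nhds hq.1)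
    · exact (continuous_apply 3).continuousAt.eventually (lt_mem_nhds (sub_pos.2 hq.2))
  obtain ⟨δ, hδ, hball⟩ := Metric.eventually_nhds_iff.1 hclose
  refine ⟨δ, hδ, fun L U hLU => ?_⟩
  obtain ⟨hdist, h1, h3⟩ := hball ((dist_pi_lt_iff hδ).2 hLU)
  rwa [ratioEst_eq_trimmedRatio h1 h3, ← Real.dist_eq]

lemma ratioEst_mem_Icc {nL nU : ℕ} (L : Fin nL → ℝ × Bool) (U : Fin nU → ℝ) :
    ratioEst L U ∈ Set.Icc (0 : ℝ) 1 := by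
  dsimp only [ratioEst]
  split_ifs
  · exact ⟨le_max_left _ _, max_le zero_le_one (min_le_left _ _)⟩
  · exact ⟨le_rfl, zero_le_one⟩

section DataLaw

variable {E : Type*} [MeasurableSpace E] {ν0 ν1 : Measure E} {q θ : ℝ} {nL nU : ℕ} {δ : ℝ}

lemma dataLaw_preimage_fst [IsProbabilityMeasure (mixLaw ν0 ν1 θ)]
    (B : Set (Fin nL → E × Bool)) :
    dataLaw nL nU ν0 ν1 q θ (Prod.fst ⁻¹' B) = Measure.pi (fun _ => labeledLaw ν0 ν1 q) B := by
  rw [dataLaw, ← Set.prod_univ, Measure.prod_prod, measure_univ, mul_one]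

lemma dataLaw_preimage_snd [IsProbabilityMeasure (labeledLaw ν0 ν1 q)]
    [IsProbabilityMeasure (mixLaw ν0 ν1 θ)] (B : Set (Fin nU → E)) :
    dataLaw nL nU ν0 ν1 q θ (Prod.snd ⁻¹' B) = Measure.pi (fun _ => mixLaw ν0 ν1 θ) B := by
  rw [dataLaw, ← Set.univ_prod, Measure.prod_prod, measure_univ, one_mul]

variable [IsProbabilityMeasure (labeledLaw ν0 ν1 q)] [IsProbabilityMeasure (mixLaw ν0 ν1 θ)]

lemma tendsto_dataLaw_abs_empiricalMean_fst_sub_ge {f : E × Bool → ℝ}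
    (hf : MemLp f 2 (labeledLaw ν0 ν1 q)) {c : ℝ} (hc : ∫ r, f r ∂(labeledLaw ν0 ν1 q) = c)
    (hδ : 0 < δ) :
    Tendsto (fun p : ℕ × ℕ =>
        dataLaw p.1 p.2 ν0 ν1 q θ {ω | δ ≤ |empiricalMean f ω.1 - c|}) atTop (𝓝 0) := by
  have hfst : Tendsto (fun p : ℕ × ℕ => p.1) atTop atTop := by
    rw [← prod_atTop_atTop_eq]
    exact tendsto_fst
  subst hc
  exact ((tendsto_measure_pi_abs_empiricalMean_sub_ge hf hδ).comp hfst).congr fun p =>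
    (dataLaw_preimage_fst _).symm

lemma tendsto_dataLaw_abs_empiricalMean_snd_sub_ge {f : E → ℝ}
    (hf : MemLp f 2 (mixLaw ν0 ν1 θ)) {c : ℝ} (hc : ∫ w, f w ∂(mixLaw ν0 ν1 θ) = c)
    (hδ : 0 < δ) :
    Tendsto (fun p : ℕ × ℕ =>
        dataLaw p.1 p.2 ν0 ν1 q θ {ω | δ ≤ |empiricalMean f ω.2 - c|}) atTop (𝓝 0) := by
  have hsnd : Tendsto (fun p : ℕ × ℕ => p.2) atTop atTop := by
    rw [← prod_atTop_atTop_eq]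
    exact tendsto_snd
  subst hc
  exact ((tendsto_measure_pi_abs_empiricalMean_sub_ge hf hδ).comp hsnd).congr fun p =>
    (dataLaw_preimage_snd _).symm

end DataLaw

theorem tendsto_dataLaw_abs_ratioEst_sub_gt {q θ : ℝ} (hq : q ∈ Set.Ioo (0 : ℝ) 1)
    (hθ : θ ∈ Set.Icc (0 : ℝ) 1) {ν0 ν1 : Measure ℝ} [IsProbabilityMeasure ν0]
    [IsProbabilityMeasure ν1] (h0 : MemLp id 2 ν0) (h1 : MemLp id 2 ν1)
    (hm : ∫ t, t ∂ν1 ≠ ∫ t, t ∂ν0) {η : ℝ} (hη : 0 < η) :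
    Tendsto (fun p : ℕ × ℕ => dataLaw p.1 p.2 ν0 ν1 q θ {ω | η < |ratioEst ω.1 ω.2 - θ|})
      atTop (𝓝 0) := by
  have := isProbabilityMeasure_labeledLaw (ν0 := ν0) (ν1 := ν1) (Set.Ioo_subset_Icc_self hq)
  have := isProbabilityMeasure_mixLaw (ν0 := ν0) (ν1 := ν1) hθ
  obtain ⟨δ, hδ, hclose⟩ := exists_abs_ratioEst_sub_lt hq hθ hm hη
  set s := populationStats q θ (∫ t, t ∂ν0) (∫ t, t ∂ν1)
  have hstat : ∀ k, Tendsto (fun p : ℕ × ℕ => dataLaw p.1 p.2 ν0 ν1 q θ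
      {ω | δ ≤ |empiricalStats ω.1 ω.2 k - s k|}) atTop (𝓝 0) := by
    have hq' := Set.Ioo_subset_Icc_self hq
    have hi0 := h0.integrable one_le_two
    have hi1 := h1.integrable one_le_two
    have hone0 : Integrable (1 : ℝ → ℝ) ν0 := integrable_const 1
    have hone1 : Integrable (1 : ℝ → ℝ) ν1 := integrable_const 1
    have hfreq : ∀ b, MemLp (classPart b 1) 2 (labeledLaw ν0 ν1 q) := fun b =>
      memLp_classPart b measurable_const (memLp_const 1) (memLp_const 1)
    intro k
    fin_cases k
    · exact tendsto_dataLaw_abs_empiricalMean_fst_sub_ge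
        (memLp_classPart true measurable_id h0 h1) (integral_classPart hq' true hi0 hi1) hδ
    · exact tendsto_dataLaw_abs_empiricalMean_fst_sub_ge (hfreq true)
        (by simpa [s, populationStats] using integral_classPart hq' true hone0 hone1) hδ
    · exact tendsto_dataLaw_abs_empiricalMean_fst_sub_ge
        (memLp_classPart false measurable_id h0 h1) (integral_classPart hq' false hi0 hi1) hδ
    · exact tendsto_dataLaw_abs_empiricalMean_fst_sub_ge (hfreq false)
        (by simpa [s, populationStats] using integral_classPart hq' false hone0 hone1) hδ
    · exact tendsto_dataLaw_abs_empiricalMean_snd_sub_ge (memLp_two_mixLaw h0 h1)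
        (integral_mixLaw hθ hi0 hi1) hδ
  have hsub : ∀ p : ℕ × ℕ, {ω : (Fin p.1 → ℝ × Bool) × (Fin p.2 → ℝ) |
      η < |ratioEst ω.1 ω.2 - θ|} ⊆ ⋃ k, {ω | δ ≤ |empiricalStats ω.1 ω.2 k - s k|} := by
    intro p ω hω
    by_contra hnot
    simp only [Set.mem_iUnion, Set.mem_ofPred_eq, not_exists, not_le] at hnot
    exact (hclose ω.1 ω.2 hnot).not_gt hω
  refine tendsto_of_tendsto_of_tendsto_of_le_of_le tendsto_const_nhds
    (by simpa using tendsto_finsetSum Finset.univ fun k _ => hstat k)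
    (fun _ => zero_le) fun p => (measure_mono (hsub p)).trans (measure_iUnion_fintype_le _ _)

section Bounded

variable {Ω : Type*} [MeasurableSpace Ω]

lemma lintegral_ofReal_sq_le_add_measure (μ : Measure Ω) [IsProbabilityMeasure μ]
    {g : Ω → ℝ} (hg : ∀ ω, |g ω| ≤ 1) (η : ℝ) :
    ∫⁻ ω, ENNReal.ofReal (g ω ^ 2) ∂μ ≤ ENNReal.ofReal (η ^ 2) + μ {ω | η < |g ω|} := by
  calc ∫⁻ ω, ENNReal.ofReal (g ω ^ 2) ∂μ
      ≤ ∫⁻ ω, ENNReal.ofReal (η ^ 2) + {ω | η < |g ω|}.indicator (fun _ => 1) ω ∂μ := by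
        refine lintegral_mono fun ω => ?_
        by_cases hω : η < |g ω|
        · rw [Set.indicator_of_mem (show ω ∈ {ω | η < |g ω|} from hω)]
          refine le_add_left (ENNReal.ofReal_le_one.2 ?_)
          rw [← sq_abs]
          exact pow_le_one₀ (abs_nonneg _) (hg ω)
        · rw [Set.indicator_of_notMem (show ω ∉ {ω | η < |g ω|} from hω), add_zero, ← sq_abs]
          exact ENNReal.ofReal_le_ofReal (pow_le_pow_left₀ (abs_nonneg _) (not_lt.1 hω) 2)
    _ ≤ ENNReal.ofReal (η ^ 2) + μ {ω | η < |g ω|} := by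
        rw [lintegral_add_left measurable_const, lintegral_const, measure_univ, mul_one]
        exact add_le_add_right ((lintegral_indicator_const_le _ 1).trans_eq (one_mul _)) _

theorem tendsto_lintegral_ofReal_sq_of_tendsto_measure {ι : Type*} {l : Filter ι}
    {Ω : ι → Type*} [∀ i, MeasurableSpace (Ω i)] {μ : ∀ i, Measure (Ω i)}
    [∀ i, IsProbabilityMeasure (μ i)] {g : ∀ i, Ω i → ℝ} (hg : ∀ i ω, |g i ω| ≤ 1)
    (h : ∀ η > 0, Tendsto (fun i => μ i {ω | η < |g i ω|}) l (𝓝 0)) :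
    Tendsto (fun i => ∫⁻ ω, ENNReal.ofReal (g i ω ^ 2) ∂μ i) l (𝓝 0) := by
  rw [ENNReal.tendsto_nhds_zero]
  intro ε hε
  obtain ⟨r, hr0, hr, hrε⟩ := ENNReal.lt_iff_exists_real_btwn.1 (ENNReal.half_pos hε.ne')
  have hη : 0 < √r := Real.sqrt_pos.2 (ENNReal.ofReal_pos.1 hr)
  filter_upwards [ENNReal.tendsto_nhds_zero.1 (h _ hη) _ (ENNReal.half_pos hε.ne')] with i hi
  calc _ ≤ ENNReal.ofReal (√r ^ 2) + μ i {ω | √r < |g i ω|} :=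
        lintegral_ofReal_sq_le_add_measure (μ i) (hg i) _
    _ ≤ ε / 2 + ε / 2 := by
        rw [Real.sq_sqrt hr0]; exact add_le_add hrε.le hi
    _ = ε := ENNReal.add_halves ε

end Bounded

theorem stmt_5_general (ε K q θ : ℝ) (hε : 0 < ε)
    (hq : q ∈ Set.Ioo (0 : ℝ) 1) (hθ : θ ∈ Set.Icc (0 : ℝ) 1)
    (ν0 ν1 : Measure ℝ) [IsProbabilityMeasure ν0] [IsProbabilityMeasure ν1]
    (hsq0 : (∫⁻ t, ENNReal.ofReal (t ^ 2) ∂ν0) ≤ ENNReal.ofReal K)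
    (hsq1 : (∫⁻ t, ENNReal.ofReal (t ^ 2) ∂ν1) ≤ ENNReal.ofReal K)
    (hsep : ε ≤ |(∫ t, t ∂ν1) - ∫ t, t ∂ν0|) :
    Tendsto
        (fun p : ℕ × ℕ =>
          ∫⁻ ω, ENNReal.ofReal ((ratioEst ω.1 ω.2 - θ) ^ 2)
            ∂(dataLaw p.1 p.2 ν0 ν1 q θ))
        atTop (nhds 0) ∧
      ∀ η : ℝ, 0 < η →
        Tendsto
          (fun p : ℕ × ℕ =>
            dataLaw p.1 p.2 ν0 ν1 q θ {ω | η < |ratioEst ω.1 ω.2 - θ|})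
          atTop (nhds 0) := by
  have hm : ∫ t, t ∂ν1 ≠ ∫ t, t ∂ν0 := sub_ne_zero.1 (abs_pos.1 (hε.trans_le hsep))
  have h0 := memLp_two_id_of_lintegral_sq_lt_top (hsq0.trans_lt ENNReal.ofReal_lt_top)
  have h1 := memLp_two_id_of_lintegral_sq_lt_top (hsq1.trans_lt ENNReal.ofReal_lt_top)
  have hprob := fun η (hη : 0 < η) => tendsto_dataLaw_abs_ratioEst_sub_gt hq hθ h0 h1 hm hη
  have (p : ℕ × ℕ) :=
    isProbabilityMeasure_dataLaw (ν0 := ν0) (ν1 := ν1) (Set.Ioo_subset_Icc_self hq) hθ p.1 p.2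
  refine ⟨tendsto_lintegral_ofReal_sq_of_tendsto_measure (fun p ω => ?_) hprob, hprob⟩
  obtain ⟨hr0, hr1⟩ := ratioEst_mem_Icc ω.1 ω.2
  exact abs_sub_le_of_nonneg_of_le hr0 hr1 hθ.1 hθ.2

/-- the trimmed ratio estimator is consistent in `L²` and in
probability as `min(n_L, n_U) → ∞` (i.e. along `atTop` on `ℕ × ℕ`). -/
theorem stmt_5 (ε K q θ : ℝ) (hε : 0 < ε) (hK : 0 < K)
    (hq : q ∈ Set.Ioo (0 : ℝ) 1) (hθ : θ ∈ Set.Icc (0 : ℝ) 1)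
    (ν0 ν1 : Measure ℝ) [IsProbabilityMeasure ν0] [IsProbabilityMeasure ν1]
    (hsq0 : (∫⁻ t, ENNReal.ofReal (t ^ 2) ∂ν0) ≤ ENNReal.ofReal K)
    (hsq1 : (∫⁻ t, ENNReal.ofReal (t ^ 2) ∂ν1) ≤ ENNReal.ofReal K)
    (hsep : ε ≤ |(∫ t, t ∂ν1) - ∫ t, t ∂ν0|) :
    Tendsto
        (fun p : ℕ × ℕ =>
          ∫⁻ ω, ENNReal.ofReal ((ratioEst ω.1 ω.2 - θ) ^ 2)
            ∂(dataLaw p.1 p.2 ν0 ν1 q θ))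
        atTop (nhds 0) ∧
      ∀ η : ℝ, 0 < η →
        Tendsto
          (fun p : ℕ × ℕ =>
            dataLaw p.1 p.2 ν0 ν1 q θ {ω | η < |ratioEst ω.1 ω.2 - θ|})
          atTop (nhds 0) :=
  stmt_5_general ε K q θ hε hq hθ ν0 ν1 hsq0 hsq1 hsep
end
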